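/- arXiv:1907.00365 — 2 statements merged into one kernel-verified Lean document; each statement's English description precedes it below -/
import Mathlib

section
/- Craig's representation of the Q function: for any t ≥ 0, Q(t) = (1/π) ∫_0^{π/2} exp(-t²/(2 sin²θ)) dθ. -/
open MeasureTheory Real Set

noncomputable section

local notation "S" => Set.Ioo (-(π/2)) (π/2)

-- x² + (x tan φ)² = x²/cos²φ
lemma aux_sq {x φ : ℝ} (hc : Real.cos φ ≠ 0) :
    x ^ 2 + (x * Real.tan φ) ^ 2 = x ^ 2 / Real.cos φ ^ 2 := by
  rw [Real.tan_eq_sin_div_cos]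
  field_simp
  linear_combination x ^ 2 * (Real.sin_sq_add_cos_sq φ)

lemma himg {x : ℝ} (hx : 0 < x) : (fun φ => x * Real.tan φ) '' S = univ := by
  have : (fun φ => x * Real.tan φ) = (fun y => x * y) ∘ Real.tan := rfl
  rw [this, Set.image_comp, Real.image_tan_Ioo, Set.image_univ, Set.range_eq_univ]
  intro y; exact ⟨y / x, by field_simp⟩

lemma hinj {x : ℝ} (hx : 0 < x) : InjOn (fun φ => x * Real.tan φ) S := by
  intro a ha b hb h
  exact Real.injOn_tan ha hb (mul_left_cancel₀ hx.ne' h)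

lemma hderiv {x : ℝ} : ∀ φ ∈ S, HasDerivWithinAt (fun φ => x * Real.tan φ)
    (x / Real.cos φ ^ 2) S φ := by
  intro φ hφ
  have hc := (Real.cos_pos_of_mem_Ioo hφ).ne'
  have := (Real.hasDerivAt_tan hc).const_mul x
  rw [mul_one_div] at this
  exact this.hasDerivWithinAt

lemma gauss_int (x : ℝ) :
    ∫ y : ℝ, Real.exp (-(x ^ 2 + y ^ 2) / 2) = Real.sqrt (2 * π) * Real.exp (-x ^ 2 / 2) := by
  have h : ∀ y : ℝ, Real.exp (-(x ^ 2 + y ^ 2) / 2)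
      = Real.exp (-x ^ 2 / 2) * Real.exp (-(1/2) * y ^ 2) := by
    intro y; rw [← Real.exp_add]; ring_nf
  simp_rw [h]
  rw [MeasureTheory.integral_const_mul, integral_gaussian]
  rw [show π / (1/2 : ℝ) = 2 * π by ring, mul_comm]

lemma gauss_integrable (x : ℝ) :
    Integrable (fun y : ℝ => Real.exp (-(x ^ 2 + y ^ 2) / 2)) := by
  have h : ∀ y : ℝ, Real.exp (-(x ^ 2 + y ^ 2) / 2)
      = Real.exp (-x ^ 2 / 2) * Real.exp (-(1/2) * y ^ 2) := by
    intro y; rw [← Real.exp_add]; ring_nf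
  simp_rw [h]
  exact (integrable_exp_neg_mul_sq (by norm_num)).const_mul _

-- pointwise identity on S
lemma ptwise {x φ : ℝ} (hx : 0 < x) (hφ : φ ∈ S) :
    |x / Real.cos φ ^ 2| • Real.exp (-(x ^ 2 + (x * Real.tan φ) ^ 2) / 2)
      = x / Real.cos φ ^ 2 * Real.exp (-(x ^ 2 / Real.cos φ ^ 2) / 2) := by
  have hc := Real.cos_pos_of_mem_Ioo hφ
  rw [smul_eq_mul, abs_of_pos (div_pos hx (pow_pos hc 2)), aux_sq hc.ne']

lemma lemA {x : ℝ} (hx : 0 < x) :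
    ∫ φ in S, x / Real.cos φ ^ 2 * Real.exp (-(x ^ 2 / Real.cos φ ^ 2) / 2)
      = Real.sqrt (2 * π) * Real.exp (-x ^ 2 / 2) := by
  have h := integral_image_eq_integral_abs_deriv_smul measurableSet_Ioo hderiv (hinj hx)
    (fun y => Real.exp (-(x ^ 2 + y ^ 2) / 2))
  rw [himg hx, setIntegral_univ, gauss_int x] at h
  rw [h]
  exact setIntegral_congr_fun measurableSet_Ioo fun φ hφ => (ptwise hx hφ).symm

lemma lemAint {x : ℝ} (hx : 0 < x) :
    IntegrableOn (fun φ => x / Real.cos φ ^ 2 * Real.exp (-(x ^ 2 / Real.cos φ ^ 2) / 2)) S := by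
  have h := (integrableOn_image_iff_integrableOn_abs_deriv_smul measurableSet_Ioo hderiv
    (hinj hx) (fun y => Real.exp (-(x ^ 2 + y ^ 2) / 2))).mp
    (by rw [himg hx]; exact (gauss_integrable x).integrableOn)
  exact h.congr_fun (fun φ hφ => ptwise hx hφ) measurableSet_Ioo

lemma lemB {t : ℝ} (ht : 0 ≤ t) {c : ℝ} (hc : 0 < c) :
    ∫ x in Set.Ioi t, x * c * Real.exp (-(x ^ 2 * c) / 2) = Real.exp (-(t ^ 2 * c) / 2) := by
  have hderiv : ∀ x ∈ Set.Ici t, HasDerivAt (fun y => -Real.exp (-(y ^ 2 * c) / 2))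
      (x * c * Real.exp (-(x ^ 2 * c) / 2)) x := by
    intro x _
    have h0 : HasDerivAt (fun y : ℝ => y ^ 2) (2 * x) x := by simpa using hasDerivAt_pow 2 x
    have h1 := (((h0.mul_const c).div_const 2).neg).exp.neg
    have hf : (fun y : ℝ => -Real.exp (-(y ^ 2 * c) / 2))
        = fun y : ℝ => -Real.exp (-(y ^ 2 * c / 2)) := by
      funext y; rw [neg_div]
    rw [hf, show x * c * Real.exp (-(x ^ 2 * c) / 2)
      = -(Real.exp (-(x ^ 2 * c / 2)) * -(2 * x * c / 2)) by rw [neg_div]; ring]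
    exact h1
  have htend : Filter.Tendsto (fun y : ℝ => -Real.exp (-(y ^ 2 * c) / 2)) Filter.atTop (nhds 0) := by
    have h2 : Filter.Tendsto (fun y : ℝ => -(y ^ 2 * c) / 2) Filter.atTop Filter.atBot := by
      have h3 : Filter.Tendsto (fun y : ℝ => y ^ 2) Filter.atTop Filter.atTop :=
        Filter.tendsto_pow_atTop two_ne_zero
      have := h3.atTop_mul_const_of_neg (show -(c / 2) < 0 by linarith)
      convert this using 2 with y; ring
    have := (Real.tendsto_exp_atBot.comp h2).neg
    simpa using this
  have := integral_Ioi_of_hasDerivAt_of_nonneg' hderiv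
    (fun x hx => by
      have hx0 : (0:ℝ) < x := lt_of_le_of_lt ht hx
      positivity) htend
  simpa using this


@[reducible] def Fc (x φ : ℝ) : ℝ :=
  x / Real.cos φ ^ 2 * Real.exp (-(x ^ 2 / Real.cos φ ^ 2) / 2)

/-- Craig's representation of the Gaussian `Q` function: for `t ≥ 0`,
`Q(t) = (1/√(2π)) ∫_t^∞ exp(-x²/2) dx = (1/π) ∫_0^{π/2} exp(-t²/(2 sin²θ)) dθ`. -/
theorem stmt11 (t : ℝ) (ht : 0 ≤ t) :
    (1 / Real.sqrt (2 * Real.pi)) * ∫ x in Set.Ioi t, Real.exp (-x ^ 2 / 2) =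
      (1 / Real.pi) *
        ∫ θ in (0 : ℝ)..(Real.pi / 2), Real.exp (-t ^ 2 / (2 * Real.sin θ ^ 2)) := by
  have hπ := Real.pi_pos
  -- measurability on the product
  have hcosne : ∀ p : ℝ × ℝ, p ∈ Set.Ioi t ×ˢ S → Real.cos p.2 ^ 2 ≠ 0 := fun p hp =>
    pow_ne_zero 2 (Real.cos_pos_of_mem_Ioo hp.2).ne'
  have hcont : ContinuousOn (Function.uncurry Fc) (Set.Ioi t ×ˢ S) := by
    apply ContinuousOn.mul
    · exact continuousOn_fst.div
        ((Real.continuous_cos.comp continuous_snd).pow 2).continuousOn hcosne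
    · apply Real.continuous_exp.comp_continuousOn
      exact (((continuousOn_fst.pow 2).div
        ((Real.continuous_cos.comp continuous_snd).pow 2).continuousOn hcosne).neg).div_const 2
  have hmeas : AEStronglyMeasurable (Function.uncurry Fc)
      ((volume.restrict (Set.Ioi t)).prod (volume.restrict S)) := by
    rw [Measure.prod_restrict]
    exact hcont.aestronglyMeasurable (measurableSet_Ioi.prod measurableSet_Ioo)
  have hFnn : ∀ x : ℝ, 0 < x → ∀ φ : ℝ, 0 ≤ Fc x φ := fun x hx φ =>
    mul_nonneg (div_nonneg hx.le (sq_nonneg _)) (Real.exp_nonneg _)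
  have hexpint : Integrable (fun x : ℝ => Real.exp (-x ^ 2 / 2)) := by
    have h := integrable_exp_neg_mul_sq (show (0:ℝ) < 1/2 by norm_num)
    apply h.congr
    filter_upwards with x
    ring_nf
  have hint : Integrable (Function.uncurry Fc)
      ((volume.restrict (Set.Ioi t)).prod (volume.restrict S)) := by
    rw [MeasureTheory.integrable_prod_iff hmeas]
    constructor
    · filter_upwards [ae_restrict_mem measurableSet_Ioi] with x hx
      exact lemAint (lt_of_le_of_lt ht hx)
    · have hg : Integrable (fun x : ℝ => Real.sqrt (2 * π) * Real.exp (-x ^ 2 / 2))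
          (volume.restrict (Set.Ioi t)) := (hexpint.const_mul _).restrict
      apply hg.congr
      filter_upwards [ae_restrict_mem measurableSet_Ioi] with x hx
      have hx0 : 0 < x := lt_of_le_of_lt ht hx
      have h1 : ∫ φ in S, ‖Fc x φ‖ = ∫ φ in S, Fc x φ :=
        setIntegral_congr_fun measurableSet_Ioo fun φ _ => Real.norm_of_nonneg (hFnn x hx0 φ)
      show Real.sqrt (2 * π) * Real.exp (-x ^ 2 / 2) = ∫ φ in S, ‖Fc x φ‖
      rw [h1, lemA hx0]
  have swap : ∫ x in Set.Ioi t, (∫ φ in S, Fc x φ) = ∫ φ in S, (∫ x in Set.Ioi t, Fc x φ) :=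
    integral_integral_swap hint
  have lhs_eq : ∫ x in Set.Ioi t, (∫ φ in S, Fc x φ)
      = Real.sqrt (2 * π) * ∫ x in Set.Ioi t, Real.exp (-x ^ 2 / 2) := by
    have e1 : ∫ x in Set.Ioi t, (∫ φ in S, Fc x φ)
        = ∫ x in Set.Ioi t, Real.sqrt (2 * π) * Real.exp (-x ^ 2 / 2) :=
      setIntegral_congr_fun measurableSet_Ioi fun x hx => lemA (lt_of_le_of_lt ht hx)
    rw [e1, MeasureTheory.integral_const_mul]
  have rhs_eq : ∫ φ in S, (∫ x in Set.Ioi t, Fc x φ)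
      = ∫ φ in S, Real.exp (-(t ^ 2 / Real.cos φ ^ 2) / 2) := by
    refine setIntegral_congr_fun measurableSet_Ioo fun φ hφ => ?_
    have hc := Real.cos_pos_of_mem_Ioo hφ
    have hcpos : 0 < (Real.cos φ ^ 2)⁻¹ := inv_pos.2 (pow_pos hc 2)
    have h := lemB ht hcpos
    simp only [Fc, div_eq_mul_inv]
    exact h
  -- now the angular integral
  set h : ℝ → ℝ := fun φ => Real.exp (-(t ^ 2 / Real.cos φ ^ 2) / 2) with hh
  have hm : Measurable h :=
    Real.measurable_exp.comp
      (((measurable_const.div (Real.measurable_cos.pow_const 2)).neg).div_const 2)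
  have hbb : ∀ φ, ‖h φ‖ ≤ 1 := by
    intro φ
    rw [Real.norm_eq_abs, abs_of_pos (Real.exp_pos _)]
    have h0 : -(t ^ 2 / Real.cos φ ^ 2) / 2 ≤ 0 := by
      have : 0 ≤ t ^ 2 / Real.cos φ ^ 2 := div_nonneg (sq_nonneg _) (sq_nonneg _)
      linarith
    simpa using Real.exp_le_exp.2 h0
  have hII : ∀ a b : ℝ, IntervalIntegrable h volume a b := by
    intro a b
    rw [intervalIntegrable_iff]
    have hfin : volume (Set.uIoc a b) ≠ ⊤ := by rw [Set.uIoc]; exact measure_Ioc_lt_top.ne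
    exact Measure.integrableOn_of_bounded hfin hm.aestronglyMeasurable (ae_of_all _ hbb)
  have K1 : ∫ φ in S, h φ = ∫ φ in (-(π/2))..(π/2), h φ := by
    rw [intervalIntegral.integral_of_le (by linarith : -(π/2) ≤ π/2),
      integral_Ioc_eq_integral_Ioo]
  have K2 : ∫ φ in (-(π/2))..(π/2), h φ
      = (∫ φ in (-(π/2))..(0:ℝ), h φ) + ∫ φ in (0:ℝ)..(π/2), h φ :=
    (intervalIntegral.integral_add_adjacent_intervals (hII _ _) (hII _ _)).symm
  have K3 : ∫ φ in (-(π/2))..(0:ℝ), h φ = ∫ φ in (0:ℝ)..(π/2), h φ := by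
    have e := intervalIntegral.integral_comp_neg (a := (0:ℝ)) (b := π/2) h
    rw [neg_zero] at e
    rw [← e]
    apply intervalIntegral.integral_congr
    intro x _
    simp only [hh, Real.cos_neg]
  have K4 : ∫ φ in (0:ℝ)..(π/2), h φ
      = ∫ θ in (0:ℝ)..(π/2), Real.exp (-t ^ 2 / (2 * Real.sin θ ^ 2)) := by
    have e := intervalIntegral.integral_comp_sub_left (a := (0:ℝ)) (b := π/2)
      (fun θ => Real.exp (-t ^ 2 / (2 * Real.sin θ ^ 2))) (π/2)
    simp only [Real.sin_pi_div_two_sub, sub_self, sub_zero] at e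
    rw [← e]
    apply intervalIntegral.integral_congr
    intro x _
    simp only [hh]
    congr 1
    ring
  set I := ∫ x in Set.Ioi t, Real.exp (-x ^ 2 / 2) with hI
  set J := ∫ θ in (0:ℝ)..(π/2), Real.exp (-t ^ 2 / (2 * Real.sin θ ^ 2)) with hJ
  have key : Real.sqrt (2 * π) * I = 2 * J := by
    rw [← lhs_eq, swap, rhs_eq]
    calc ∫ φ in S, h φ = _ := K1
    _ = _ := K2
    _ = J + J := by rw [K3, K4]
    _ = 2 * J := by ring
  have hs : 0 < Real.sqrt (2*π) := Real.sqrt_pos.2 (by positivity)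
  have hsq : Real.sqrt (2*π) ^ 2 = 2*π := Real.sq_sqrt (by positivity)
  rw [div_mul_eq_mul_div, div_mul_eq_mul_div, div_eq_div_iff hs.ne' hπ.ne']
  linear_combination (Real.sqrt (2*π)/2) * key - (I/2) * hsq
end
end

section
/- MGF of a Gaussian quadratic form: if ω ∼ CN(μ, Σ) in C^n and A is Hermitian positive semidefinite with I - tΣA invertible and t ≤ 0, then E[exp(t ω† A ω)] = (1/det(I - tΣA)) exp(t μ† A (I - tΣA)^{-1} μ). -/
open MeasureTheory Matrix
open scoped ComplexOrder

section Aux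

lemma gauss1 {a : ℝ} (ha : 0 < a) :
    ∫ z : ℂ, Real.exp (-(a * Complex.normSq z)) = Real.pi / a := by
  have h := (Complex.volume_preserving_equiv_real_prod.symm
      Complex.measurableEquivRealProd).integral_comp
      (Complex.measurableEquivRealProd.symm.measurableEmbedding)
      (fun z : ℂ => Real.exp (-(a * Complex.normSq z)))
  rw [← h]
  have : ∀ p : ℝ × ℝ, Real.exp (-(a * Complex.normSq
      (Complex.measurableEquivRealProd.symm p)))
      = Real.exp (-a * p.1 ^ 2) * Real.exp (-a * p.2 ^ 2) := by
    intro p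
    rw [← Real.exp_add]
    congr 1
    have : Complex.measurableEquivRealProd.symm p = Complex.equivRealProd.symm p := rfl
    rw [this]
    simp only [Complex.equivRealProd_symm_apply]
    rw [Complex.normSq_add_mul_I]
    ring
  simp_rw [this]
  rw [show (volume : Measure (ℝ × ℝ)) = (volume : Measure ℝ).prod volume from rfl]
  rw [integral_prod_mul (fun x : ℝ => Real.exp (-a * x ^ 2)) (fun y : ℝ => Real.exp (-a * y ^ 2))]
  rw [integral_gaussian]
  exact Real.mul_self_sqrt (by positivity)

lemma gauss_diag (n : ℕ) {d : Fin n → ℝ} (hd : ∀ i, 0 < d i) :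
    ∫ z : Fin n → ℂ, Real.exp (-(∑ i, d i * Complex.normSq (z i)))
      = ∏ i, (Real.pi / d i) := by
  have : ∀ z : Fin n → ℂ, Real.exp (-(∑ i, d i * Complex.normSq (z i)))
      = ∏ i, Real.exp (-(d i * Complex.normSq (z i))) := by
    intro z
    rw [← Real.exp_sum, ← Finset.sum_neg_distrib]
  simp_rw [this]
  rw [MeasureTheory.volume_pi, MeasureTheory.integral_fintype_prod_eq_prod
    (f := fun i (x : ℂ) => Real.exp (-(d i * Complex.normSq x)))]
  exact Finset.prod_congr rfl fun i _ => gauss1 (hd i)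

variable {n : ℕ}

/-- adjoint move: `star (M *ᵥ x) ⬝ᵥ y = star x ⬝ᵥ (Mᴴ *ᵥ y)`. -/
lemma star_mulVec_dot (M : Matrix (Fin n) (Fin n) ℂ) (x y : Fin n → ℂ) :
    star (M *ᵥ x) ⬝ᵥ y = star x ⬝ᵥ (Mᴴ *ᵥ y) := by
  rw [star_mulVec, dotProduct_mulVec]

lemma unitary_dot {U : Matrix (Fin n) (Fin n) ℂ} (hU : Uᴴ * U = 1) (z : Fin n → ℂ) :
    star (U *ᵥ z) ⬝ᵥ (U *ᵥ z) = star z ⬝ᵥ z := by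
  rw [star_mulVec_dot, mulVec_mulVec, hU, one_mulVec]

lemma sum_normSq_eq (z : Fin n → ℂ) :
    (star z ⬝ᵥ z) = ((∑ i, Complex.normSq (z i) : ℝ) : ℂ) := by
  simp only [dotProduct, Pi.star_apply]
  push_cast
  refine Finset.sum_congr rfl fun i _ => ?_
  rw [Complex.star_def, Complex.normSq_eq_conj_mul_self]

lemma unitary_measurePreserving {U : Matrix (Fin n) (Fin n) ℂ}
    (hU1 : Uᴴ * U = 1) (hU2 : U * Uᴴ = 1) :
    MeasurePreserving (fun z : Fin n → ℂ => U *ᵥ z) volume volume := by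
  -- the ℂ-linear equivalence given by U
  let e : (Fin n → ℂ) ≃ₗ[ℂ] (Fin n → ℂ) :=
    LinearEquiv.ofLinear U.mulVecLin (Uᴴ).mulVecLin
      (by rw [← Matrix.mulVecLin_mul, hU2, Matrix.mulVecLin_one])
      (by rw [← Matrix.mulVecLin_mul, hU1, Matrix.mulVecLin_one])
  let eR : (Fin n → ℂ) ≃ₗ[ℝ] (Fin n → ℂ) := e.restrictScalars ℝ
  have hdet : LinearMap.det (eR : (Fin n → ℂ) →ₗ[ℝ] (Fin n → ℂ)) ≠ 0 :=
    (LinearEquiv.isUnit_det' eR).ne_zero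
  have hcoe : ∀ z, (eR : (Fin n → ℂ) →ₗ[ℝ] (Fin n → ℂ)) z = U *ᵥ z := fun z => rfl
  -- the invariant set
  set s : Set (Fin n → ℂ) := {z | (∑ i, Complex.normSq (z i)) < 1} with hs
  have hcont : Continuous fun z : Fin n → ℂ => ∑ i, Complex.normSq (z i) := by
    refine continuous_finset_sum _ fun i _ => Complex.continuous_normSq.comp (continuous_apply i)
  have hsopen : IsOpen s := isOpen_lt hcont continuous_const
  have hsne : s.Nonempty := ⟨0, by simp [hs]⟩
  have hspos : 0 < volume s := hsopen.measure_pos volume hsne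
  have hsfin : volume s < ⊤ := by
    refine lt_of_le_of_lt (measure_mono ?_) (measure_closedBall_lt_top (x := (0 : Fin n → ℂ)) (r := 1))
    intro z hz
    simp only [Metric.mem_closedBall, dist_zero_right]
    rw [pi_norm_le_iff_of_nonneg (by norm_num)]
    intro i
    have h1 : Complex.normSq (z i) ≤ ∑ j, Complex.normSq (z j) :=
      Finset.single_le_sum (fun j _ => Complex.normSq_nonneg (z j)) (Finset.mem_univ i)
    have h2 : Complex.normSq (z i) < 1 := lt_of_le_of_lt h1 hz
    have := Real.sqrt_le_sqrt h2.le
    rw [show (1:ℝ) = Real.sqrt 1 by simp]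
    rw [show ‖z i‖ = Real.sqrt (Complex.normSq (z i)) from by rw [Complex.norm_def]]
    exact this
  -- invariance of s
  have hinv : (fun z : Fin n → ℂ => U *ᵥ z) ⁻¹' s = s := by
    ext z
    simp only [Set.mem_preimage, hs, Set.mem_setOf_eq]
    have := unitary_dot hU1 z
    rw [sum_normSq_eq, sum_normSq_eq z] at this
    rw [show (∑ i, Complex.normSq ((U *ᵥ z) i)) = ∑ i, Complex.normSq (z i) by
      exact_mod_cast congrArg Complex.re this]
  -- determinant has absolute value 1
  have hpre := Measure.addHaar_preimage_linearMap (volume : Measure (Fin n → ℂ)) hdet s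
  have hfun : ⇑(eR : (Fin n → ℂ) →ₗ[ℝ] (Fin n → ℂ)) = fun z => U *ᵥ z := funext hcoe
  rw [hfun, hinv] at hpre
  have hone : ENNReal.ofReal |(LinearMap.det (eR : (Fin n → ℂ) →ₗ[ℝ] (Fin n → ℂ)))⁻¹| = 1 := by
    have := hpre.symm
    rwa [ENNReal.mul_eq_right hspos.ne' hsfin.ne] at this
  have hmap := Measure.map_linearMap_addHaar_eq_smul_addHaar (volume : Measure (Fin n → ℂ)) hdet
  rw [hfun, hone, one_smul] at hmap
  have hmeas : Measurable (fun z : Fin n → ℂ => U *ᵥ z) := by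
    rw [← hfun]
    exact (LinearMap.continuous_of_finiteDimensional _).measurable
  exact ⟨hmeas, hmap⟩

lemma gauss_core {B : Matrix (Fin n) (Fin n) ℂ} (hB : B.PosDef) :
    ∫ z : Fin n → ℂ, Real.exp (-(star z ⬝ᵥ B *ᵥ z).re)
      = Real.pi ^ n / ∏ i, hB.1.eigenvalues i := by
  set U : Matrix (Fin n) (Fin n) ℂ := (hB.1.eigenvectorUnitary : Matrix (Fin n) (Fin n) ℂ) with hUdef
  have hU1 : Uᴴ * U = 1 := by
    have := hB.1.eigenvectorUnitary.2
    rw [Unitary.mem_iff] at this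
    simpa [star_eq_conjTranspose] using this.1
  have hU2 : U * Uᴴ = 1 := by
    have := hB.1.eigenvectorUnitary.2
    rw [Unitary.mem_iff] at this
    simpa [star_eq_conjTranspose] using this.2
  have hmp := unitary_measurePreserving hU1 hU2
  -- measurable embedding
  have hemb : MeasurableEmbedding (fun z : Fin n → ℂ => U *ᵥ z) := by
    let e : (Fin n → ℂ) ≃ₗ[ℂ] (Fin n → ℂ) :=
      LinearEquiv.ofLinear U.mulVecLin (Uᴴ).mulVecLin
        (by rw [← Matrix.mulVecLin_mul, hU2, Matrix.mulVecLin_one])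
        (by rw [← Matrix.mulVecLin_mul, hU1, Matrix.mulVecLin_one])
    have : (fun z : Fin n → ℂ => U *ᵥ z) = ⇑(e.toContinuousLinearEquiv.toHomeomorph) := rfl
    rw [this]
    exact (e.toContinuousLinearEquiv.toHomeomorph).measurableEmbedding
  rw [← hmp.integral_comp hemb (fun z => Real.exp (-(star z ⬝ᵥ B *ᵥ z).re))]
  have key : ∀ w : Fin n → ℂ, (star (U *ᵥ w) ⬝ᵥ B *ᵥ (U *ᵥ w)).re
      = ∑ i, hB.1.eigenvalues i * Complex.normSq (w i) := by
    intro w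
    have hquad : star (U *ᵥ w) ⬝ᵥ B *ᵥ (U *ᵥ w)
        = star w ⬝ᵥ (diagonal (RCLike.ofReal ∘ hB.1.eigenvalues) *ᵥ w) := by
      conv_lhs => rw [hB.1.spectral_theorem]
      rw [star_mulVec_dot]
      rw [mulVec_mulVec, mulVec_mulVec]
      congr 2
      rw [Unitary.conjStarAlgAut_apply]
      rw [show (star U : Matrix (Fin n) (Fin n) ℂ) = Uᴴ from rfl, ← hUdef]
      rw [show Uᴴ * (U * diagonal (RCLike.ofReal ∘ hB.1.eigenvalues) * Uᴴ) * U
          = (Uᴴ * U) * diagonal (RCLike.ofReal ∘ hB.1.eigenvalues) * (Uᴴ * U) by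
        noncomm_ring]
      rw [hU1, one_mul, mul_one]
    rw [hquad]
    simp only [dotProduct, mulVec_diagonal, Pi.star_apply, Function.comp_apply,
      show (RCLike.ofReal : ℝ → ℂ) = Complex.ofReal from rfl]
    rw [Complex.re_sum]
    refine Finset.sum_congr rfl fun i _ => ?_
    have : star (w i) * (((hB.1.eigenvalues i : ℝ) : ℂ) * w i)
        = ((hB.1.eigenvalues i * Complex.normSq (w i) : ℝ) : ℂ) := by
      rw [show star (w i) = (starRingEnd ℂ) (w i) from rfl]
      push_cast
      rw [show ((Complex.normSq (w i) : ℝ) : ℂ) = (starRingEnd ℂ) (w i) * w i from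
        Complex.normSq_eq_conj_mul_self ▸ rfl]
      ring
    rw [this, Complex.ofReal_re]
  simp_rw [key]
  rw [gauss_diag n hB.eigenvalues_pos]
  rw [Finset.prod_div_distrib, Finset.prod_const]
  simp

end Aux

lemma herm_dot {M : Matrix (Fin n) (Fin n) ℂ} (hM : M.IsHermitian) (x y : Fin n → ℂ) :
    star (M *ᵥ x) ⬝ᵥ y = star x ⬝ᵥ (M *ᵥ y) := by
  rw [star_mulVec_dot, hM.eq]

/-- MGF of a complex Gaussian quadratic form.  If `ω ∼ CN(μ, Σ)`
in `ℂⁿ` (density `p ω = (1/(πⁿ det Σ)) exp(-(ω-μ)† Σ⁻¹ (ω-μ))`, with `Σ`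
Hermitian positive definite), `A` is Hermitian positive semidefinite, `t ≤ 0`,
and `I - tΣA` is invertible, then
`E[exp(t ω† A ω)] = (1/det(I - tΣA)) exp(t μ† A (I - tΣA)⁻¹ μ)`. -/
theorem stmt14 (n : ℕ) (hn : 0 < n) (μ : Fin n → ℂ)
    (S A : Matrix (Fin n) (Fin n) ℂ)
    (hS : S.PosDef) (hA : A.PosSemidef) (t : ℝ) (ht : t ≤ 0)
    (hinv : IsUnit (1 - (t : ℂ) • (S * A)))
    (p : (Fin n → ℂ) → ℝ)
    (hp : ∀ ω, p ω = (1 / (Real.pi ^ n * (S.det).re)) *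
        Real.exp (-(dotProduct (star (ω - μ)) (S⁻¹.mulVec (ω - μ))).re)) :
    ((∫ ω : Fin n → ℂ,
        p ω * Real.exp (t * (dotProduct (star ω) (A.mulVec ω)).re) : ℝ) : ℂ) =
      (1 / (1 - (t : ℂ) • (S * A)).det) *
        Complex.exp ((t : ℂ) *
          dotProduct (star μ) ((A * (1 - (t : ℂ) • (S * A))⁻¹).mulVec μ)) := by
  set T : Matrix (Fin n) (Fin n) ℂ := 1 - (t : ℂ) • (S * A) with hT
  have hTdet : IsUnit T.det := (Matrix.isUnit_iff_isUnit_det T).mp hinv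
  have hTT : T * T⁻¹ = 1 := Matrix.mul_nonsing_inv T hTdet
  have hTT' : T⁻¹ * T = 1 := Matrix.nonsing_inv_mul T hTdet
  have hSdet : IsUnit S.det := isUnit_iff_ne_zero.mpr (fun h => by
    have := hS.det_pos; rw [h] at this; exact lt_irrefl 0 this)
  have hSS : S⁻¹ * S = 1 := Matrix.nonsing_inv_mul S hSdet
  have hSS' : S * S⁻¹ = 1 := Matrix.mul_nonsing_inv S hSdet
  -- B
  set B : Matrix (Fin n) (Fin n) ℂ := S⁻¹ * T with hB
  have hBeq : B = S⁻¹ + (-t : ℂ) • A := by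
    rw [hB, hT, mul_sub, mul_one, mul_smul_comm, ← mul_assoc, hSS, one_mul, sub_eq_add_neg,
      ← neg_smul]
  have hAsmul : ((-t : ℂ) • A).PosSemidef := by
    constructor
    · have hAH := hA.1
      rw [IsHermitian, conjTranspose_smul, hAH.eq]
      congr 1
      simp [Complex.ext_iff]
    · intro x
      have h1 : (0:ℂ) ≤ (-t : ℂ) := by
        rw [show (-(t:ℂ)) = ((-t : ℝ) : ℂ) by push_cast; ring]
        exact Complex.zero_le_real.mpr (by linarith)
      exact (hA.smul h1).2 x
  have hBpos : B.PosDef := by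
    rw [hBeq]
    exact hS.inv.add_posSemidef hAsmul
  have hBH : B.IsHermitian := hBpos.1
  have hSinvH : S⁻¹.IsHermitian := hS.inv.1
  -- m and key identities
  set m : Fin n → ℂ := T⁻¹ *ᵥ μ with hm
  have hBm : B *ᵥ m = S⁻¹ *ᵥ μ := by
    rw [hm, hB, mulVec_mulVec, mul_assoc, hTT, mul_one]
  set c : ℂ := star μ ⬝ᵥ (S⁻¹ *ᵥ μ) - star μ ⬝ᵥ (S⁻¹ *ᵥ m) with hc
  -- pointwise quadratic identity
  have key : ∀ ω : Fin n → ℂ,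
      star (ω - μ) ⬝ᵥ (S⁻¹ *ᵥ (ω - μ)) - (t : ℂ) * (star ω ⬝ᵥ (A *ᵥ ω))
        = star (ω - m) ⬝ᵥ (B *ᵥ (ω - m)) + c := by
    intro ω
    have e1 : star ω ⬝ᵥ (B *ᵥ ω) = star ω ⬝ᵥ (S⁻¹ *ᵥ ω) + (-t : ℂ) * (star ω ⬝ᵥ (A *ᵥ ω)) := by
      rw [hBeq, add_mulVec, dotProduct_add, Matrix.smul_mulVec, dotProduct_smul,
        smul_eq_mul]
    have e2 : star ω ⬝ᵥ (B *ᵥ m) = star ω ⬝ᵥ (S⁻¹ *ᵥ μ) := by rw [hBm]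
    have e3 : star m ⬝ᵥ (B *ᵥ ω) = star μ ⬝ᵥ (S⁻¹ *ᵥ ω) := by
      rw [← herm_dot hBH, hBm, herm_dot hSinvH]
    have e4 : star m ⬝ᵥ (B *ᵥ m) = star μ ⬝ᵥ (S⁻¹ *ᵥ m) := by
      rw [← herm_dot hBH, hBm, herm_dot hSinvH]
    have hsx : star (ω - μ) = star ω - star μ := star_sub _ _
    have hsy : star (ω - m) = star ω - star m := star_sub _ _
    rw [hsx, hsy, mulVec_sub, mulVec_sub, sub_dotProduct, sub_dotProduct,
      dotProduct_sub, dotProduct_sub, dotProduct_sub, dotProduct_sub, e1, e2, e3, e4, hc]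
    ring
  -- c in final form
  set q : ℂ := star μ ⬝ᵥ ((A * T⁻¹) *ᵥ μ) with hq
  have hcq : c = (-t : ℂ) * q := by
    rw [hc, hq, ← dotProduct_sub]
    congr 1
    have : S⁻¹ *ᵥ μ - S⁻¹ *ᵥ m = (S⁻¹ - S⁻¹ * T⁻¹) *ᵥ μ := by
      rw [sub_mulVec, hm, mulVec_mulVec]
    rw [this]
    congr 1
    have h2 : S⁻¹ - S⁻¹ * T⁻¹ = S⁻¹ * (T - 1) * T⁻¹ := by
      rw [mul_sub, mul_one, sub_mul, mul_assoc, hTT, mul_one]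
    rw [h2, hT]
    have h3 : (1 - (t:ℂ) • (S * A)) - 1 = (-t : ℂ) • (S * A) := by
      rw [sub_sub_cancel_left, ← neg_smul]
    rw [h3, mul_smul_comm, ← mul_assoc, hSS, one_mul, Matrix.smul_mul,
      Matrix.smul_mulVec, dotProduct_smul, smul_eq_mul]
  -- q is real
  have hMH : (A * T⁻¹).IsHermitian := by
    have hTH : Tᴴ = 1 - (t : ℂ) • (A * S) := by
      rw [hT, conjTranspose_sub, conjTranspose_one, conjTranspose_smul, conjTranspose_mul,
        hA.1.eq, hS.1.eq]
      congr 1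
      simp [Complex.ext_iff]
    have hTHdet : IsUnit (Tᴴ).det := by
      rw [Matrix.det_conjTranspose]
      exact hTdet.star
    have hcomm : (1 - (t:ℂ) • (A * S)) * A = A * T := by
      rw [hT]
      simp only [sub_mul, mul_sub, one_mul, mul_one, Matrix.smul_mul, Matrix.mul_smul,
        mul_assoc]
    have hswap : (Tᴴ)⁻¹ * A = A * T⁻¹ := by
      rw [hTH]
      calc (1 - (t:ℂ) • (A * S))⁻¹ * A
          = (1 - (t:ℂ) • (A * S))⁻¹ * A * (T * T⁻¹) := by rw [hTT, mul_one]
        _ = (1 - (t:ℂ) • (A * S))⁻¹ * (A * T) * T⁻¹ := by noncomm_ring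
        _ = (1 - (t:ℂ) • (A * S))⁻¹ * ((1 - (t:ℂ) • (A * S)) * A) * T⁻¹ := by rw [hcomm]
        _ = ((1 - (t:ℂ) • (A * S))⁻¹ * (1 - (t:ℂ) • (A * S))) * A * T⁻¹ := by noncomm_ring
        _ = A * T⁻¹ := by
            rw [Matrix.nonsing_inv_mul _ (by rw [← hTH]; exact hTHdet), one_mul]
    rw [IsHermitian, conjTranspose_mul, Matrix.conjTranspose_nonsing_inv, hA.1.eq, hswap]
  have hqreal : ((q.re : ℝ) : ℂ) = q := by
    have hstarq : star q = q := by
      calc star q = star (star (star ((A * T⁻¹) *ᵥ μ) ⬝ᵥ μ)) := by rw [hq, star_dotProduct]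
        _ = star ((A * T⁻¹) *ᵥ μ) ⬝ᵥ μ := star_star _
        _ = star μ ⬝ᵥ ((A * T⁻¹) *ᵥ μ) := herm_dot hMH μ μ
        _ = q := hq.symm
    have hconj : (starRingEnd ℂ) q = q := hstarq
    exact Complex.conj_eq_iff_re.mp hconj
  -- assemble the integral
  have hint : ∀ ω : Fin n → ℂ,
      p ω * Real.exp (t * (star ω ⬝ᵥ (A *ᵥ ω)).re)
        = ((1 / (Real.pi ^ n * (S.det).re)) * Real.exp (-c.re))
            * Real.exp (-(star (ω - m) ⬝ᵥ (B *ᵥ (ω - m))).re) := by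
    intro ω
    rw [hp ω, mul_assoc, ← Real.exp_add, mul_assoc, ← Real.exp_add]
    congr 2
    have h1 : t * (star ω ⬝ᵥ (A *ᵥ ω)).re = ((t:ℂ) * (star ω ⬝ᵥ (A *ᵥ ω))).re := by
      rw [Complex.re_ofReal_mul]
    have h2 := congrArg Complex.re (key ω)
    rw [Complex.sub_re, Complex.add_re] at h2
    rw [h1]
    linarith
  simp_rw [hint]
  rw [MeasureTheory.integral_const_mul]
  have htrans : (∫ ω : Fin n → ℂ, Real.exp (-(star (ω - m) ⬝ᵥ (B *ᵥ (ω - m))).re))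
      = ∫ ω : Fin n → ℂ, Real.exp (-(star ω ⬝ᵥ (B *ᵥ ω)).re) :=
    MeasureTheory.integral_sub_right_eq_self
      (fun ω : Fin n → ℂ => Real.exp (-(star ω ⬝ᵥ (B *ᵥ ω)).re)) m
  rw [htrans, gauss_core hBpos]
  -- final numeric computation
  set P : ℝ := ∏ i, hBpos.1.eigenvalues i with hP
  have hPpos : 0 < P := Finset.prod_pos (fun i _ => hBpos.eigenvalues_pos i)
  have hSre : 0 < S.det.re := by
    have := hS.det_pos
    rw [Complex.lt_def] at this
    exact this.1
  have hSim : S.det.im = 0 := by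
    have := hS.det_pos
    rw [Complex.lt_def] at this
    exact this.2.symm
  have hSdetre : ((S.det.re : ℝ) : ℂ) = S.det := by
    apply Complex.ext <;> simp [hSim]
  have hPdet : ((P : ℝ) : ℂ) = B.det := by
    rw [hBH.det_eq_prod_eigenvalues, hP]
    push_cast
    rfl
  have hBdet : B.det = S.det⁻¹ * T.det := by
    rw [hB, Matrix.det_mul, Matrix.det_nonsing_inv, Ring.inverse_eq_inv']
  have hreal : (1 / (Real.pi ^ n * S.det.re) * Real.exp (-c.re) * (Real.pi ^ n / P))
      = Real.exp (-c.re) / (S.det.re * P) := by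
    field_simp
  rw [hreal]
  push_cast [Complex.ofReal_exp]
  rw [hSdetre, hPdet, hBdet]
  have hcR : c = ((-t * q.re : ℝ) : ℂ) := by
    rw [hcq]
    conv_lhs => rw [← hqreal]
    push_cast
    ring
  have h1 : (-c.re : ℝ) = t * q.re := by
    rw [hcR, Complex.ofReal_re]
    ring
  have hcre : -((c.re : ℝ) : ℂ) = (t : ℂ) * q := by
    rw [← Complex.ofReal_neg, h1]
    push_cast
    rw [hqreal]
  rw [hcre]
  have hdetS_ne : S.det ≠ 0 := hSdet.ne_zero
  have hdetT_ne : T.det ≠ 0 := hTdet.ne_zero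
  rw [show S.det * (S.det⁻¹ * T.det) = T.det by field_simp]
  rw [hq]
  ring
end
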